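/- arXiv:1711.03439 — 5 statements merged into one kernel-verified Lean document; each statement's English description precedes it below -/
import Mathlib

section
/- For all u, û ∈ ℝ^m and β > 0, it holds that h(û) ≥ h_β(u) + ⟨y*_β(u), û − u⟩ + (β/2)‖y*_β(u) − ẏ‖². -/
open scoped RealInnerProductSpace

section

variable {E : Type*} [NormedAddCommGroup E] [InnerProductSpace ℝ E]

theorem inner_sub_le_iSup_inner_sub {S : Set E} (f : E → ℝ) (v : E) {y : E} (hy : y ∈ S) :
    ((⟪v, y⟫ - f y : ℝ) : EReal) ≤ ⨆ z : S, ((⟪v, (z : E)⟫ - f z : ℝ) : EReal) :=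
  le_iSup (fun z : S => ((⟪v, (z : E)⟫ - f z : ℝ) : EReal)) ⟨y, hy⟩

theorem smoothed_objective_add_inner_add_prox (f : E → ℝ) (β : ℝ) (u v y ydot : E) :
    (⟪u, y⟫ - f y - β / 2 * ‖y - ydot‖ ^ 2) + ⟪y, v - u⟫ + β / 2 * ‖y - ydot‖ ^ 2
      = ⟪v, y⟫ - f y := by
  rw [inner_sub_right, real_inner_comm y v, real_inner_comm y u]
  ring

end

/-- `h*` is `hstar` on its effective domain `S`, `h(v)` is the `EReal` supremum on the right,
and `yb u` is the maximizer `y*_β(u)`. -/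
theorem conjugate_lower_bound_of_smoothed_general (m : ℕ) (S : Set (EuclideanSpace ℝ (Fin m)))
    (hstar : EuclideanSpace ℝ (Fin m) → ℝ)
    (ydot : EuclideanSpace ℝ (Fin m)) (β : ℝ)
    (yb : EuclideanSpace ℝ (Fin m) → EuclideanSpace ℝ (Fin m))
    (hyb : ∀ u, yb u ∈ S ∧
      (∀ z ∈ S, ⟪u, z⟫ - hstar z - β / 2 * ‖z - ydot‖ ^ 2
          ≤ ⟪u, yb u⟫ - hstar (yb u) - β / 2 * ‖yb u - ydot‖ ^ 2) ∧
      (∀ z ∈ S, ⟪u, z⟫ - hstar z - β / 2 * ‖z - ydot‖ ^ 2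
          = ⟪u, yb u⟫ - hstar (yb u) - β / 2 * ‖yb u - ydot‖ ^ 2 → z = yb u)) :
    ∀ u v : EuclideanSpace ℝ (Fin m),
      (((⟪u, yb u⟫ - hstar (yb u) - β / 2 * ‖yb u - ydot‖ ^ 2)
          + ⟪yb u, v - u⟫ + β / 2 * ‖yb u - ydot‖ ^ 2 : ℝ) : EReal)
        ≤ ⨆ y : S, ((⟪v, (y : EuclideanSpace ℝ (Fin m))⟫ - hstar y : ℝ) : EReal) := by
  intro u v
  rw [smoothed_objective_add_inner_add_prox]
  exact inner_sub_le_iSup_inner_sub hstar v (hyb u).1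

/-- Lemma 1(c): `h(û) ≥ h_β(u) + ⟨y*_β(u), û - u⟩ + (β/2)‖y*_β(u) - ẏ‖²`.
The proper closed convex `h*` is encoded by its nonempty effective domain `S`, a convex
real function `hstar` on `S`, and a closed epigraph; `h` is the Fenchel conjugate of `h*`,
i.e. `h(û) = sup_{y ∈ S} (⟨û, y⟩ - h*(y))`, taken in the extended reals since it may be
`+∞`; `yb u = y*_β(u)` is the unique maximizer defining `h_β(u)`. -/
theorem conjugate_lower_bound_of_smoothed (m : ℕ) (S : Set (EuclideanSpace ℝ (Fin m)))
    (hstar : EuclideanSpace ℝ (Fin m) → ℝ)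
    (hS : S.Nonempty) (hconv : ConvexOn ℝ S hstar)
    (hclosed : IsClosed {q : EuclideanSpace ℝ (Fin m) × ℝ | q.1 ∈ S ∧ hstar q.1 ≤ q.2})
    (ydot : EuclideanSpace ℝ (Fin m)) (β : ℝ) (hβ : 0 < β)
    (yb : EuclideanSpace ℝ (Fin m) → EuclideanSpace ℝ (Fin m))
    (hyb : ∀ u, yb u ∈ S ∧
      (∀ z ∈ S, ⟪u, z⟫ - hstar z - β / 2 * ‖z - ydot‖ ^ 2
          ≤ ⟪u, yb u⟫ - hstar (yb u) - β / 2 * ‖yb u - ydot‖ ^ 2) ∧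
      (∀ z ∈ S, ⟪u, z⟫ - hstar z - β / 2 * ‖z - ydot‖ ^ 2
          = ⟪u, yb u⟫ - hstar (yb u) - β / 2 * ‖yb u - ydot‖ ^ 2 → z = yb u)) :
    ∀ u v : EuclideanSpace ℝ (Fin m),
      (((⟪u, yb u⟫ - hstar (yb u) - β / 2 * ‖yb u - ydot‖ ^ 2)
          + ⟪yb u, v - u⟫ + β / 2 * ‖yb u - ydot‖ ^ 2 : ℝ) : EReal)
        ≤ ⨆ y : S, ((⟪v, (y : EuclideanSpace ℝ (Fin m))⟫ - hstar y : ℝ) : EReal) :=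
  conjugate_lower_bound_of_smoothed_general m S hstar ydot β yb hyb
end

section
/- For all u ∈ ℝ^m and all β, β̄ > 0, it holds that h_β(u) ≤ h_β̄(u) + ((β̄ − β)/2)‖y*_β(u) − ẏ‖². -/
open scoped RealInnerProductSpace

/-- `h_β(u)` appears as the value of its objective at the maximizer `yb β u`. -/
theorem smoothed_function_beta_comparison_general (m : ℕ) (S : Set (EuclideanSpace ℝ (Fin m)))
    (hstar : EuclideanSpace ℝ (Fin m) → ℝ)
    (ydot : EuclideanSpace ℝ (Fin m))
    (yb : ℝ → EuclideanSpace ℝ (Fin m) → EuclideanSpace ℝ (Fin m))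
    (hyb : ∀ β : ℝ, 0 < β → ∀ u, yb β u ∈ S ∧
      (∀ z ∈ S, ⟪u, z⟫ - hstar z - β / 2 * ‖z - ydot‖ ^ 2
          ≤ ⟪u, yb β u⟫ - hstar (yb β u) - β / 2 * ‖yb β u - ydot‖ ^ 2) ∧
      (∀ z ∈ S, ⟪u, z⟫ - hstar z - β / 2 * ‖z - ydot‖ ^ 2
          = ⟪u, yb β u⟫ - hstar (yb β u) - β / 2 * ‖yb β u - ydot‖ ^ 2 → z = yb β u)) :
    ∀ u : EuclideanSpace ℝ (Fin m), ∀ β β' : ℝ, 0 < β → 0 < β' →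
      ⟪u, yb β u⟫ - hstar (yb β u) - β / 2 * ‖yb β u - ydot‖ ^ 2
        ≤ (⟪u, yb β' u⟫ - hstar (yb β' u) - β' / 2 * ‖yb β' u - ydot‖ ^ 2)
          + (β' - β) / 2 * ‖yb β u - ydot‖ ^ 2 := by
  intro u β β' hβ hβ'
  have hmax := (hyb β' hβ' u).2.1 (yb β u) (hyb β hβ u).1
  linarith

/-- Lemma 1(d): for all `u` and all `β, β̄ > 0`,
`h_β(u) ≤ h_β̄(u) + ((β̄ - β)/2)‖y*_β(u) - ẏ‖²`. The proper closed convex `h*` is encoded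
by its nonempty effective domain `S`, a convex real function `hstar` on `S`, and a closed
epigraph; `yb β u = y*_β(u)` is the unique maximizer defining `h_β(u)`, so `h_β(u)` is the
objective value at `yb β u`. -/
theorem smoothed_function_beta_comparison (m : ℕ) (S : Set (EuclideanSpace ℝ (Fin m)))
    (hstar : EuclideanSpace ℝ (Fin m) → ℝ)
    (hS : S.Nonempty) (hconv : ConvexOn ℝ S hstar)
    (hclosed : IsClosed {q : EuclideanSpace ℝ (Fin m) × ℝ | q.1 ∈ S ∧ hstar q.1 ≤ q.2})
    (ydot : EuclideanSpace ℝ (Fin m))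
    (yb : ℝ → EuclideanSpace ℝ (Fin m) → EuclideanSpace ℝ (Fin m))
    (hyb : ∀ β : ℝ, 0 < β → ∀ u, yb β u ∈ S ∧
      (∀ z ∈ S, ⟪u, z⟫ - hstar z - β / 2 * ‖z - ydot‖ ^ 2
          ≤ ⟪u, yb β u⟫ - hstar (yb β u) - β / 2 * ‖yb β u - ydot‖ ^ 2) ∧
      (∀ z ∈ S, ⟪u, z⟫ - hstar z - β / 2 * ‖z - ydot‖ ^ 2
          = ⟪u, yb β u⟫ - hstar (yb β u) - β / 2 * ‖yb β u - ydot‖ ^ 2 → z = yb β u)) :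
    ∀ u : EuclideanSpace ℝ (Fin m), ∀ β β' : ℝ, 0 < β → 0 < β' →
      ⟪u, yb β u⟫ - hstar (yb β u) - β / 2 * ‖yb β u - ydot‖ ^ 2
        ≤ (⟪u, yb β' u⟫ - hstar (yb β' u) - β' / 2 * ‖yb β' u - ydot‖ ^ 2)
          + (β' - β) / 2 * ‖yb β u - ydot‖ ^ 2 :=
  smoothed_function_beta_comparison_general m S hstar ydot yb hyb
end

section
/- Let τ_0 ∈ (0, 1] and for every k ≥ 1 let τ_k be the unique positive root of τ³ + τ² + τ_{k−1}² τ − τ_{k−1}² = 0. Then for all k ≥ 0, 1/(k + τ_0⁻¹) ≤ τ_k ≤ 2/(k + τ_0⁻¹ + 1). -/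
/-!
In terms of the reciprocals `τ_k⁻¹` the recursion is almost a unit-speed walk: a positive root
`t` of `t³ + t² + c² t - c² = 0` satisfies `c⁻¹ + 1/2 ≤ t⁻¹ ≤ c⁻¹ + 1`. Summing these increments
gives `τ_0⁻¹ + k/2 ≤ τ_k⁻¹ ≤ τ_0⁻¹ + k`; the right inequality is the lower bound on `τ_k`, and
the left one yields the upper bound because `τ_0⁻¹ ≥ 1`.
-/

section CubicStep

variable {c t : ℝ}

theorem inv_le_inv_add_one_of_cubic (hc : 0 < c) (ht : 0 < t)
    (h : t ^ 3 + t ^ 2 + c ^ 2 * t - c ^ 2 = 0) : t⁻¹ ≤ c⁻¹ + 1 := by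
  -- `key` reads `c (1 - t) ≤ t`, and the cubic says `c² (1 - t) = t² (1 + t)`,
  -- so `c² (1 - t)² = t² (1 - t²) ≤ t²`.
  have key : c ≤ t * (1 + c) := by
    nlinarith [sq_nonneg (t * (1 + c) - c), mul_pos hc ht, mul_pos (mul_pos hc hc) ht]
  rw [inv_le_iff_one_le_mul₀ ht]
  calc (1 : ℝ) = c⁻¹ * c := (inv_mul_cancel₀ hc.ne').symm
    _ ≤ c⁻¹ * (t * (1 + c)) := by gcongr
    _ = (c⁻¹ + 1) * t := by field_simp

theorem inv_add_half_le_inv_of_cubic (hc : 0 < c) (ht : 0 < t)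
    (h : t ^ 3 + t ^ 2 + c ^ 2 * t - c ^ 2 = 0) : c⁻¹ + 1 / 2 ≤ t⁻¹ := by
  -- `key` reads `2t ≤ c (2 - t)`, and `c² (2 - t)² - 4t² = t³ (t² - 3t + 4) / (1 - t) ≥ 0`.
  have key : t * (2 + c) ≤ 2 * c := by
    nlinarith [sq_nonneg (t * (2 + c) - 2 * c), mul_pos hc ht, mul_pos (mul_pos hc hc) ht]
  rw [← one_div t, le_div_iff₀ ht]
  calc (c⁻¹ + 1 / 2) * t = c⁻¹ * (t * (2 + c)) / 2 := by field_simp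
    _ ≤ c⁻¹ * (2 * c) / 2 := by gcongr
    _ = 1 := by field_simp

end CubicStep

section Increments

variable {u : ℕ → ℝ}

theorem add_mul_le_of_le_sub_succ {a : ℝ} (h : ∀ k, a ≤ u (k + 1) - u k) (k : ℕ) :
    u 0 + k * a ≤ u k := by
  induction k with
  | zero => simp
  | succ k ih => push_cast; linarith [h k]

theorem le_add_mul_of_sub_succ_le {b : ℝ} (h : ∀ k, u (k + 1) - u k ≤ b) (k : ℕ) :
    u k ≤ u 0 + k * b := by
  induction k with
  | zero => simp
  | succ k ih => push_cast; linarith [h k]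

end Increments

/-- Bounds on the step-size sequence `τ_k` of SMART-CD, where `τ_0 ∈ (0,1]`
and, for `k ≥ 1`, `τ_k` is the (unique) positive root of
`τ³ + τ² + τ_{k-1}² τ - τ_{k-1}² = 0`. -/
theorem smartcd_tau_bounds (τ : ℕ → ℝ) (hτ0 : τ 0 ∈ Set.Ioc (0 : ℝ) 1)
    (hrec : ∀ k : ℕ, 0 < τ (k + 1) ∧
      (τ (k + 1)) ^ 3 + (τ (k + 1)) ^ 2 + (τ k) ^ 2 * τ (k + 1) - (τ k) ^ 2 = 0) :
    ∀ k : ℕ, 1 / ((k : ℝ) + (τ 0)⁻¹) ≤ τ k ∧ τ k ≤ 2 / ((k : ℝ) + (τ 0)⁻¹ + 1) := by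
  obtain ⟨h0pos, h0le⟩ := hτ0
  have hpos : ∀ k, 0 < τ k := fun k => k.casesOn h0pos fun k => (hrec k).1
  have hinv_le : ∀ k, (τ k)⁻¹ ≤ (τ 0)⁻¹ + k * 1 :=
    le_add_mul_of_sub_succ_le (u := fun k => (τ k)⁻¹) fun k => by
      linarith [inv_le_inv_add_one_of_cubic (hpos k) (hpos (k + 1)) (hrec k).2]
  have hle_inv : ∀ k, (τ 0)⁻¹ + k * (1 / 2) ≤ (τ k)⁻¹ :=
    add_mul_le_of_le_sub_succ (u := fun k => (τ k)⁻¹) fun k => by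
      linarith [inv_add_half_le_inv_of_cubic (hpos k) (hpos (k + 1)) (hrec k).2]
  have hone : 1 ≤ (τ 0)⁻¹ := (one_le_inv₀ h0pos).2 h0le
  intro k
  constructor
  · calc 1 / ((k : ℝ) + (τ 0)⁻¹) ≤ ((τ k)⁻¹)⁻¹ := by
          rw [one_div]; exact inv_anti₀ (inv_pos.2 (hpos k)) (by linarith [hinv_le k])
      _ = τ k := inv_inv _
  · calc τ k = ((τ k)⁻¹)⁻¹ := (inv_inv _).symm
      _ ≤ (((k : ℝ) + (τ 0)⁻¹ + 1) / 2)⁻¹ := inv_anti₀ (by positivity) (by linarith [hle_inv k])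
      _ = 2 / ((k : ℝ) + (τ 0)⁻¹ + 1) := inv_div _ _
end

section
/- Let τ_0 ∈ (0, 1], let τ_k for k ≥ 1 be the unique positive root of τ³ + τ² + τ_{k−1}² τ − τ_{k−1}² = 0, let β_1 > 0, and define β_{k+1} := β_k/(1 + τ_k) for k ≥ 1. Then for all k ≥ 1, β_k ≤ β_1(1 + τ_0)/(τ_0 k + 1). -/
/-!
The cubic is increasing in `τ > 0` and its value at `τ_k / (1 + τ_k)` is `-τ_k⁴ / (1 + τ_k)³ ≤ 0`,
so `τ_{k+1} ≥ τ_k / (1 + τ_k)`, i.e. `1 / τ_{k+1} ≤ 1 / τ_k + 1`. Telescoping gives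
`τ_k ≥ τ_0 / (τ_0 k + 1)`, hence `(τ_0 k + 1)(1 + τ_k) ≥ τ_0 (k + 1) + 1`, which is exactly the
factor the induction on `β_k` needs.
-/

lemma inv_le_inv_add_one_of_cubic_eq_zero {s t : ℝ} (hs : 0 < s) (ht : 0 < t)
    (h : t ^ 3 + t ^ 2 + s ^ 2 * t - s ^ 2 = 0) : t⁻¹ ≤ s⁻¹ + 1 := by
  have hst : s ≤ t * (1 + s) := by
    nlinarith [mul_pos ht hs, mul_pos (mul_pos ht ht) hs, mul_pos ht (mul_pos hs hs)]
  rw [inv_le_iff_one_le_mul₀ ht, add_mul, inv_mul_eq_div, one_mul, ← sub_le_iff_le_add,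
    le_div_iff₀ hs]
  linarith

lemma inv_le_inv_add_natCast {a : ℕ → ℝ} (h : ∀ k, (a (k + 1))⁻¹ ≤ (a k)⁻¹ + 1) (k : ℕ) :
    (a k)⁻¹ ≤ (a 0)⁻¹ + k := by
  induction k with
  | zero => simp
  | succ k ih => push_cast; linarith [h k]

lemma le_div_of_eq_div_one_add {β τ : ℕ → ℝ} {c : ℝ} (hc : 0 < c)
    (hτ : ∀ k : ℕ, c / (c * k + 1) ≤ τ k) (hβ1 : 0 ≤ β 1)
    (hβrec : ∀ k : ℕ, 1 ≤ k → β (k + 1) = β k / (1 + τ k)) :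
    ∀ k : ℕ, 1 ≤ k → β k ≤ β 1 * (1 + c) / (c * k + 1) := by
  intro k hk
  induction k, hk using Nat.le_induction with
  | base => rw [Nat.cast_one, mul_one, add_comm c, mul_div_cancel_right₀ _ (by positivity)]
  | succ k hk ih =>
    have hden : 0 < c * k + 1 := by positivity
    have hτk : 0 < τ k := (div_pos hc hden).trans_le (hτ k)
    have hprod : c * ↑(k + 1) + 1 ≤ (c * k + 1) * (1 + τ k) := by
      have := (div_le_iff₀ hden).1 (hτ k)
      push_cast; nlinarith
    calc β (k + 1) = β k / (1 + τ k) := hβrec k hk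
      _ ≤ β 1 * (1 + c) / (c * k + 1) / (1 + τ k) := by gcongr
      _ = β 1 * (1 + c) / ((c * k + 1) * (1 + τ k)) := by rw [div_div]
      _ ≤ β 1 * (1 + c) / (c * ↑(k + 1) + 1) := by gcongr

/-- Bound on the smoothness parameter sequence `β_k` of SMART-CD: with
`τ_0 ∈ (0,1]`, `τ_k` the (unique) positive root of `τ³ + τ² + τ_{k-1}² τ - τ_{k-1}² = 0`
for `k ≥ 1`, `β_1 > 0` and `β_{k+1} = β_k / (1 + τ_k)` for `k ≥ 1`, one has
`β_k ≤ β_1 (1 + τ_0) / (τ_0 k + 1)` for all `k ≥ 1`. -/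
theorem smartcd_beta_bound (τ β : ℕ → ℝ) (hτ0 : τ 0 ∈ Set.Ioc (0 : ℝ) 1)
    (hrec : ∀ k : ℕ, 0 < τ (k + 1) ∧
      (τ (k + 1)) ^ 3 + (τ (k + 1)) ^ 2 + (τ k) ^ 2 * τ (k + 1) - (τ k) ^ 2 = 0)
    (hβ1 : 0 < β 1)
    (hβrec : ∀ k : ℕ, 1 ≤ k → β (k + 1) = β k / (1 + τ k)) :
    ∀ k : ℕ, 1 ≤ k → β k ≤ β 1 * (1 + τ 0) / (τ 0 * (k : ℝ) + 1) := by
  have hτpos : ∀ k, 0 < τ k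
    | 0 => hτ0.1
    | k + 1 => (hrec k).1
  have hinv : ∀ k : ℕ, (τ k)⁻¹ ≤ (τ 0)⁻¹ + k := inv_le_inv_add_natCast fun k =>
    inv_le_inv_add_one_of_cubic_eq_zero (hτpos k) (hrec k).1 (hrec k).2
  have hlow : ∀ k : ℕ, τ 0 / (τ 0 * k + 1) ≤ τ k := fun k =>
    calc τ 0 / (τ 0 * k + 1) = ((τ 0)⁻¹ + k)⁻¹ := by field_simp [(hτpos 0).ne']; ring
      _ ≤ (τ k)⁻¹⁻¹ := inv_anti₀ (inv_pos.2 (hτpos k)) (hinv k)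
      _ = τ k := inv_inv _
  exact le_div_of_eq_div_one_add hτ0.1 hlow hβ1.le hβrec
end

section
/- Let τ_0 ∈ (0, 1] and let {τ_i}_{i≥1} be real numbers with 1/(i + τ_0⁻¹) ≤ τ_i ≤ 1 for all i ≥ 1. Then for every k ≥ 1, ∏_{i=1}^{k} (1 − τ_i) ≤ 1/(τ_0 k + 1). -/
/-! Since `1 - 1/(i + τ₀⁻¹) = (τ₀ (i - 1) + 1)/(τ₀ i + 1)`, each factor `1 - τ_i` is at most
`a_{i-1}/a_i` with `a_n = τ₀ n + 1`, and the product of these ratios telescopes to `a_0/a_k`. -/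

open Finset

theorem prod_Icc_le_div_of_le_div {K : Type*} [Field K] [LinearOrder K] [IsStrictOrderedRing K]
    {f a : ℕ → K} (ha : ∀ n, 0 < a n)
    (hf : ∀ n, 0 ≤ f (n + 1) ∧ f (n + 1) ≤ a n / a (n + 1)) (k : ℕ) :
    ∏ i ∈ Icc 1 k, f i ≤ a 0 / a k := by
  induction k with
  | zero => simp [(ha 0).ne']
  | succ n ih =>
    rw [prod_Icc_succ_top (by omega)]
    calc (∏ i ∈ Icc 1 n, f i) * f (n + 1)
        ≤ a 0 / a n * (a n / a (n + 1)) :=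
          mul_le_mul ih (hf n).2 (hf n).1 (div_nonneg (ha 0).le (ha n).le)
      _ = a 0 / a (n + 1) := by field_simp [(ha n).ne']

theorem one_sub_one_div_add_inv {K : Type*} [Field K] {c x : K} (hc : c ≠ 0)
    (hx : c * (x + 1) + 1 ≠ 0) :
    1 - 1 / (x + 1 + c⁻¹) = (c * x + 1) / (c * (x + 1) + 1) := by
  rw [show x + 1 + c⁻¹ = (c * (x + 1) + 1) / c by field_simp, one_div_div]
  field_simp
  ring

/-- The contraction factor of SMART-CD: if `τ_0 ∈ (0,1]` and the reals
`τ_i` satisfy `1/(i + τ_0⁻¹) ≤ τ_i ≤ 1` for all `i ≥ 1`, then for every `k ≥ 1`,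
`∏_{i=1}^k (1 - τ_i) ≤ 1/(τ_0 k + 1)`. -/
theorem smartcd_contraction_factor (τ0 : ℝ) (hτ0 : τ0 ∈ Set.Ioc (0 : ℝ) 1) (τ : ℕ → ℝ)
    (hτ : ∀ i : ℕ, 1 ≤ i → 1 / ((i : ℝ) + τ0⁻¹) ≤ τ i ∧ τ i ≤ 1) :
    ∀ k : ℕ, 1 ≤ k →
      ∏ i ∈ Finset.Icc 1 k, (1 - τ i) ≤ 1 / (τ0 * (k : ℝ) + 1) := by
  intro k _
  have hτ0_pos : 0 < τ0 := hτ0.1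
  have ha : ∀ n : ℕ, 0 < τ0 * n + 1 := fun n => by positivity
  have hfactor : ∀ n : ℕ, 0 ≤ 1 - τ (n + 1) ∧
      1 - τ (n + 1) ≤ (τ0 * n + 1) / (τ0 * ((n + 1 : ℕ) : ℝ) + 1) := fun n => by
    obtain ⟨hlower, hupper⟩ := hτ (n + 1) (by omega)
    have hratio := one_sub_one_div_add_inv (x := (n : ℝ)) hτ0_pos.ne'
      (by exact_mod_cast (ha (n + 1)).ne')
    push_cast at hlower ⊢
    constructor <;> linarith
  simpa using prod_Icc_le_div_of_le_div ha hfactor k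
end
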